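/- For any number of candidates m, any number of voters n, and any committee size k with 1 ≤ k ≤ m, the Approval Voting rule AV with lexicographic tie-breaking satisfies cardinality-strategyproofness: no voter can, by submitting any non-truthful ballot, obtain a committee containing strictly more of her truthfully approved candidates. -/
import Mathlib


open scoped Classical

/-!
Common framework: candidates are `Fin m`, voters are `Fin n`, committee size `k`.
An approval ballot is a nonempty proper subset of the candidate set.
"at least n/k voters" is encoded as `n ≤ k * (number of such voters)`,
and "strictly more than n/(k+1) voters" as `n < (k+1) * (number of such voters)`.
-/

/-- A valid approval ballot: a nonempty proper subset of the candidate set. -/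
def ValidBallot (m : ℕ) (A : Finset (Fin m)) : Prop :=
  A.Nonempty ∧ A ≠ Finset.univ

/-- A valid profile: every voter submits a valid ballot, and the ballots jointly
approve at least `k` candidates (so the committee can be filled with approved candidates). -/
def ValidProfile (m n k : ℕ) (P : Fin n → Finset (Fin m)) : Prop :=
  (∀ i, ValidBallot m (P i)) ∧ k ≤ (Finset.univ.biUnion P).card

/-- `f` is an (approval-based) committee rule: on every valid profile it returns a
committee of cardinality `k`. -/
def IsCommitteeRule (m n k : ℕ) (f : (Fin n → Finset (Fin m)) → Finset (Fin m)) : Prop :=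
  ∀ P, ValidProfile m n k P → (f P).card = k

/-- `P'` is an `i`-variant of `P`: they agree on all voters other than `i`. -/
def IVariant {m n : ℕ} (P P' : Fin n → Finset (Fin m)) (i : Fin n) : Prop :=
  ∀ j, j ≠ i → P' j = P j

/-- Strategyproofness: a voter reporting a proper subset of her truthful ballot never
obtains a committee whose intersection with her truthful ballot strictly grows. -/
def Strategyproof (m n k : ℕ) (f : (Fin n → Finset (Fin m)) → Finset (Fin m)) : Prop :=
  ∀ P P' (i : Fin n), ValidProfile m n k P → ValidProfile m n k P' →
    IVariant P P' i → P' i ⊂ P i → ¬ (f P ∩ P i ⊂ f P' ∩ P i)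

/-- Superset-strategyproofness: no i-variant (with arbitrary new ballot) yields a
committee whose intersection with the truthful ballot strictly grows. -/
def SupersetStrategyproof (m n k : ℕ) (f : (Fin n → Finset (Fin m)) → Finset (Fin m)) : Prop :=
  ∀ P P' (i : Fin n), ValidProfile m n k P → ValidProfile m n k P' →
    IVariant P P' i → ¬ (f P ∩ P i ⊂ f P' ∩ P i)

/-- Cardinality-strategyproofness: no i-variant yields a committee containing strictly
more of the truthfully approved candidates. -/
def CardinalityStrategyproof (m n k : ℕ) (f : (Fin n → Finset (Fin m)) → Finset (Fin m)) : Prop :=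
  ∀ P P' (i : Fin n), ValidProfile m n k P → ValidProfile m n k P' →
    IVariant P P' i → ¬ ((f P ∩ P i).card < (f P' ∩ P i).card)

/-- Hamming-strategyproofness: no i-variant yields a committee at strictly smaller
Hamming distance (cardinality of the symmetric difference) from the truthful ballot. -/
def HammingStrategyproof (m n k : ℕ) (f : (Fin n → Finset (Fin m)) → Finset (Fin m)) : Prop :=
  ∀ P P' (i : Fin n), ValidProfile m n k P → ValidProfile m n k P' →
    IVariant P P' i → ¬ ((symmDiff (f P') (P i)).card < (symmDiff (f P) (P i)).card)

/-- A party-list profile: any two ballots are either equal or disjoint. -/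
def PartyList {m n : ℕ} (P : Fin n → Finset (Fin m)) : Prop :=
  ∀ i j, P i = P j ∨ Disjoint (P i) (P j)

/-- Proportionality: in a party-list profile where some singleton ballot `{c}` is
submitted by at least `n/k` voters, `c` is elected. -/
def Proportional (m n k : ℕ) (f : (Fin n → Finset (Fin m)) → Finset (Fin m)) : Prop :=
  ∀ P, ValidProfile m n k P → PartyList P →
    ∀ c : Fin m, n ≤ k * (Finset.univ.filter (fun i => P i = {c})).card → c ∈ f P

/-- Droop proportionality: in ANY profile where some singleton ballot `{c}` is submitted
by strictly more than `n/(k+1)` voters, `c` is elected. -/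
def DroopProportional (m n k : ℕ) (f : (Fin n → Finset (Fin m)) → Finset (Fin m)) : Prop :=
  ∀ P, ValidProfile m n k P →
    ∀ c : Fin m, n < (k + 1) * (Finset.univ.filter (fun i => P i = {c})).card → c ∈ f P

/-- Justified representation on party lists: in a party-list profile where some ballot `A`
is submitted by at least `n/k` voters, the committee intersects `A`. -/
def JROnPartyLists (m n k : ℕ) (f : (Fin n → Finset (Fin m)) → Finset (Fin m)) : Prop :=
  ∀ P, ValidProfile m n k P → PartyList P →
    ∀ A : Finset (Fin m), n ≤ k * (Finset.univ.filter (fun i => P i = A)).card →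
      (f P ∩ A).Nonempty

/-- Justified representation: every group of at least `n/k` voters that jointly approve
some common candidate is represented by at least one committee member approved by a
group member. -/
def JR (m n k : ℕ) (f : (Fin n → Finset (Fin m)) → Finset (Fin m)) : Prop :=
  ∀ P, ValidProfile m n k P → ∀ N' : Finset (Fin n),
    n ≤ k * N'.card → (∃ c : Fin m, ∀ i ∈ N', c ∈ P i) →
    (f P ∩ N'.biUnion P).Nonempty

/-- Disjoint diversity: in a party-list profile with at most `k` distinct parties,
the committee contains a member of each party. -/
def DisjointDiversity (m n k : ℕ) (f : (Fin n → Finset (Fin m)) → Finset (Fin m)) : Prop :=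
  ∀ P, ValidProfile m n k P → PartyList P →
    (Finset.univ.image P).card ≤ k → ∀ i : Fin n, (f P ∩ P i).Nonempty

/-- Weak efficiency: a candidate approved by no voter is never elected
(on profiles where the committee can be filled with approved candidates). -/
def WeakEfficiency (m n k : ℕ) (f : (Fin n → Finset (Fin m)) → Finset (Fin m)) : Prop :=
  ∀ P, ValidProfile m n k P → ∀ c : Fin m, (∀ i, c ∉ P i) → c ∉ f P

/-- The approval score of candidate `c`: the number of voters approving `c`. -/
def avScore (m n : ℕ) (P : Fin n → Finset (Fin m)) (c : Fin m) : ℕ :=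
  (Finset.univ.filter (fun i => c ∈ P i)).card

/-- `W` is the committee selected by Approval Voting with lexicographic tie-breaking:
it has size `k`, and every member beats every non-member, either by a strictly higher
approval score or by equal score and smaller index (lexicographic tie-breaking with
respect to the fixed linear order on the candidates `Fin m`). -/
def IsAVCommittee (m n k : ℕ) (P : Fin n → Finset (Fin m)) (W : Finset (Fin m)) : Prop :=
  W.card = k ∧ ∀ c ∈ W, ∀ d : Fin m, d ∉ W →
    (avScore m n P d < avScore m n P c ∨ (avScore m n P d = avScore m n P c ∧ c < d))

/-- Approval Voting with lexicographic tie-breaking: selects the `k` candidates with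
highest approval score, breaking ties in favour of lexicographically smaller candidates. -/
noncomputable def AV (m n k : ℕ) (P : Fin n → Finset (Fin m)) : Finset (Fin m) :=
  if h : ∃ W, IsAVCommittee m n k P W then h.choose else ∅

/-- The harmonic number `H r = 1 + 1/2 + ⋯ + 1/r`, with `H 0 = 0`. -/
def harm : ℕ → ℚ
  | 0 => 0
  | r + 1 => harm r + 1 / (r + 1)

/-- The PAV score of committee `W` in profile `P`: `∑ᵢ H(|P i ∩ W|)`. -/
def pavScore (m n : ℕ) (P : Fin n → Finset (Fin m)) (W : Finset (Fin m)) : ℚ :=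
  ∑ i, harm ((P i ∩ W).card)

/-- Encoding used for lexicographic comparison of committees: a committee is
lexicographically earlier iff its encoding is larger. -/
def pavEncode (m : ℕ) (W : Finset (Fin m)) : ℕ :=
  ∑ c ∈ W, 2 ^ (m - 1 - (c : ℕ))

/-- `W` is the PAV winner: a size-`k` committee maximizing the PAV score, and the
lexicographically first among all such maximizers. -/
def IsPAVWinner (m n k : ℕ) (P : Fin n → Finset (Fin m)) (W : Finset (Fin m)) : Prop :=
  W.card = k ∧
  (∀ W' : Finset (Fin m), W'.card = k → pavScore m n P W' ≤ pavScore m n P W) ∧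
  (∀ W' : Finset (Fin m), W'.card = k → pavScore m n P W' = pavScore m n P W →
    pavEncode m W' ≤ pavEncode m W)

/-- Proportional Approval Voting, breaking ties by the lexicographically first optimum. -/
noncomputable def PAV (m n k : ℕ) (P : Fin n → Finset (Fin m)) : Finset (Fin m) :=
  if h : ∃ W, IsPAVWinner m n k P W then h.choose else ∅

/-- Key encoding (score descending, index ascending) for lexicographic ranking. -/
private def avKey (m n : ℕ) (P : Fin n → Finset (Fin m)) (c : Fin m) : ℕ :=
  (n - avScore m n P c) * m + (c : ℕ)

private lemma avScore_le_n (m n : ℕ) (P : Fin n → Finset (Fin m)) (c : Fin m) :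
    avScore m n P c ≤ n := by
  have := Finset.card_filter_le (Finset.univ : Finset (Fin n)) (fun i => c ∈ P i)
  simpa [avScore] using this

private lemma avKey_injective (m n : ℕ) (P : Fin n → Finset (Fin m)) :
    Function.Injective (avKey m n P) := by
  intro c d h
  unfold avKey at h
  have h1 : ((c : ℕ) + (n - avScore m n P c) * m) % m
      = ((d : ℕ) + (n - avScore m n P d) * m) % m := by
    rw [Nat.add_comm, Nat.add_comm (d : ℕ), h]
  rw [Nat.add_mul_mod_self_right, Nat.add_mul_mod_self_right,
    Nat.mod_eq_of_lt c.isLt, Nat.mod_eq_of_lt d.isLt] at h1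
  exact Fin.ext h1

private lemma avKey_lt_or (m n : ℕ) (P : Fin n → Finset (Fin m)) {c d : Fin m}
    (h : avKey m n P c < avKey m n P d) :
    avScore m n P d < avScore m n P c ∨
      (avScore m n P d = avScore m n P c ∧ c < d) := by
  have hc := c.isLt
  have hd := d.isLt
  have hsc := avScore_le_n m n P c
  have hsd := avScore_le_n m n P d
  unfold avKey at h
  rcases lt_trichotomy (n - avScore m n P c) (n - avScore m n P d) with h1 | h1 | h1
  · left; omega
  · right
    refine ⟨by omega, ?_⟩
    rw [h1] at h
    exact Fin.lt_def.mpr (Nat.lt_of_add_lt_add_left h)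
  · exfalso
    have h2 : (n - avScore m n P d + 1) * m ≤ (n - avScore m n P c) * m :=
      Nat.mul_le_mul_right m (by omega)
    have h3 : (n - avScore m n P d + 1) * m = (n - avScore m n P d) * m + m := by ring
    omega

private lemma exists_avCommittee (m n : ℕ) (P : Fin n → Finset (Fin m)) :
    ∀ k, k ≤ m → ∃ W : Finset (Fin m), W.card = k ∧
      ∀ c ∈ W, ∀ d ∉ W, avKey m n P c < avKey m n P d := by
  intro k
  induction k with
  | zero => intro _; exact ⟨∅, by simp⟩
  | succ k ih =>
    intro hkm
    obtain ⟨W, hcard, hprop⟩ := ih (by omega)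
    have hne : (Finset.univ \ W).Nonempty := by
      rw [← Finset.card_pos, Finset.card_sdiff_of_subset (Finset.subset_univ W)]
      simp only [Finset.card_univ, Fintype.card_fin, hcard]
      omega
    obtain ⟨d0, hd0mem, hd0min⟩ := Finset.exists_min_image _ (avKey m n P) hne
    have hd0W : d0 ∉ W := (Finset.mem_sdiff.mp hd0mem).2
    refine ⟨insert d0 W, by rw [Finset.card_insert_of_notMem hd0W, hcard], ?_⟩
    intro c hc d hd
    rcases Finset.mem_insert.mp hc with rfl | hcW
    · have hdW : d ∉ W := fun h => hd (Finset.mem_insert_of_mem h)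
      have hle := hd0min d (Finset.mem_sdiff.mpr ⟨Finset.mem_univ d, hdW⟩)
      have hne' : avKey m n P c ≠ avKey m n P d := fun h => by
        have : c = d := avKey_injective m n P h
        exact hd (this ▸ Finset.mem_insert_self c W)
      exact lt_of_le_of_ne hle hne'
    · exact hprop c hcW d (fun h => hd (Finset.mem_insert_of_mem h))

private lemma av_isAVCommittee (m n k : ℕ) (hkm : k ≤ m) (P : Fin n → Finset (Fin m)) :
    IsAVCommittee m n k P (AV m n k P) := by
  obtain ⟨W, hcard, hprop⟩ := exists_avCommittee m n P k hkm
  have hex : ∃ W, IsAVCommittee m n k P W :=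
    ⟨W, hcard, fun c hc d hd => avKey_lt_or m n P (hprop c hc d hd)⟩
  rw [AV, dif_pos hex]
  exact hex.choose_spec

private lemma score_mono_mem {m n : ℕ} {P P' : Fin n → Finset (Fin m)} {i : Fin n}
    (hvar : IVariant P P' i) {c : Fin m} (hc : c ∈ P i) :
    avScore m n P' c ≤ avScore m n P c := by
  apply Finset.card_le_card
  intro j hj
  simp only [Finset.mem_filter, Finset.mem_univ, true_and] at hj ⊢
  rcases eq_or_ne j i with rfl | h
  · exact hc
  · rw [← hvar j h]; exact hj

private lemma score_mono_notMem {m n : ℕ} {P P' : Fin n → Finset (Fin m)} {i : Fin n}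
    (hvar : IVariant P P' i) {c : Fin m} (hc : c ∉ P i) :
    avScore m n P c ≤ avScore m n P' c := by
  apply Finset.card_le_card
  intro j hj
  simp only [Finset.mem_filter, Finset.mem_univ, true_and] at hj ⊢
  rcases eq_or_ne j i with rfl | h
  · exact absurd hj hc
  · rw [hvar j h]; exact hj

/-- **AV is cardinality-strategyproof.** For any `m`, `n`, and `1 ≤ k ≤ m`, Approval
Voting with lexicographic tie-breaking satisfies cardinality-strategyproofness: no voter
can, by submitting any non-truthful ballot, obtain a committee containing strictly more
of her truthfully approved candidates. -/
theorem av_cardinality_strategyproof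
    (m n k : ℕ) (hk : 1 ≤ k) (hkm : k ≤ m) :
    CardinalityStrategyproof m n k (AV m n k) := by
  intro P P' i hP hP' hvar hlt
  set A := P i with hA
  set W := AV m n k P with hW
  set W' := AV m n k P' with hW'
  obtain ⟨hWcard, hWprop⟩ := av_isAVCommittee m n k hkm P
  obtain ⟨hW'card, hW'prop⟩ := av_isAVCommittee m n k hkm P'
  -- find c ∈ W' ∩ A with c ∉ W
  have hc : ∃ c, c ∈ W' ∧ c ∈ A ∧ c ∉ W := by
    by_contra h
    push_neg at h
    have hsub : W' ∩ A ⊆ W ∩ A := by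
      intro x hx
      rw [Finset.mem_inter] at hx ⊢
      exact ⟨h x hx.1 hx.2, hx.2⟩
    exact absurd (Finset.card_le_card hsub) (by omega)
  -- find d ∈ W \ W' with d ∉ A
  have hd : ∃ d, d ∈ W ∧ d ∉ W' ∧ d ∉ A := by
    by_contra h
    push_neg at h
    have h1 : W ∩ W' ∩ A ∪ (W \ W') ⊆ W ∩ A := by
      intro x hx
      rcases Finset.mem_union.mp hx with hx1 | hx2
      · rw [Finset.mem_inter] at hx1 ⊢
        exact ⟨(Finset.mem_inter.mp hx1.1).1, hx1.2⟩
      · rw [Finset.mem_sdiff] at hx2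
        exact Finset.mem_inter.mpr ⟨hx2.1, h x hx2.1 hx2.2⟩
    have hdisj : Disjoint (W ∩ W' ∩ A) (W \ W') := by
      rw [Finset.disjoint_left]
      intro x hx1 hx2
      exact (Finset.mem_sdiff.mp hx2).2 (Finset.mem_inter.mp (Finset.mem_inter.mp hx1).1).2
    have h2 : (W ∩ W' ∩ A).card + (W \ W').card ≤ (W ∩ A).card := by
      rw [← Finset.card_union_of_disjoint hdisj]
      exact Finset.card_le_card h1
    have h3 : (W' ∩ A).card ≤ (W ∩ W' ∩ A).card + (W' \ W).card := by
      have hsub : W' ∩ A ⊆ W ∩ W' ∩ A ∪ (W' \ W) := by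
        intro x hx
        rw [Finset.mem_inter] at hx
        by_cases hxW : x ∈ W
        · exact Finset.mem_union_left _ (by
            rw [Finset.mem_inter, Finset.mem_inter]
            exact ⟨⟨hxW, hx.1⟩, hx.2⟩)
        · exact Finset.mem_union_right _ (Finset.mem_sdiff.mpr ⟨hx.1, hxW⟩)
      calc (W' ∩ A).card ≤ (W ∩ W' ∩ A ∪ (W' \ W)).card := Finset.card_le_card hsub
        _ ≤ (W ∩ W' ∩ A).card + (W' \ W).card := Finset.card_union_le _ _
    have h4 : (W' \ W).card = (W \ W').card :=
      Finset.card_sdiff_comm (by rw [hW'card, hWcard])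
    omega
  obtain ⟨c, hcW', hcA, hcW⟩ := hc
  obtain ⟨d, hdW, hdW', hdA⟩ := hd
  have hWcd := hWprop d hdW c hcW
  have hW'cd := hW'prop c hcW' d hdW'
  have h5 : avScore m n P' c ≤ avScore m n P c := score_mono_mem hvar hcA
  have h6 : avScore m n P d ≤ avScore m n P' d := score_mono_notMem hvar hdA
  rcases hWcd with h7 | ⟨h7, h7'⟩ <;> rcases hW'cd with h8 | ⟨h8, h8'⟩
  · omega
  · omega
  · omega
  · exact absurd h8' (lt_asymm h7')
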